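/- In the digraph D(A), for every (a, r) ∈ A × R, there is a homomorphism from the path Q = Q_∅ to the connecting path P_{(a,r)} , and for each i ∈ [k], there is a homomorphism from Q_{{i}} to P_{(a,r)} if and only if a = rᵢ. Consequently the set A is pp-definable in D(A) by the formula A = {x : ∃y (x →^Q y)}, and R is pp-definable by R = {(x₁,...,x_k) : ∃y (xᵢ →^{Q_{{i}}} y for all i ∈ [k])}. -/

import Mathlib

/-- The positions `i ∈ [k]` at which `a` equals the `i`-th entry of `r`. -/
def idxSet {A : Type} [DecidableEq A] {k : ℕ} (a : A) (r : Fin k → A) : Finset (Fin k) :=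
  Finset.univ.filter (fun i => a = r i)

/-- Direction pattern of the oriented path `Q_I`: a single edge, then for each
`l ∈ [k]` a single edge (if `l ∈ I`) or a zigzag (otherwise), then a single edge. -/
def qdirs {k : ℕ} (I : Finset (Fin k)) : List Bool :=
  [true] ++ ((List.finRange k).flatMap
    (fun l => if l ∈ I then [true] else [true, false, true])) ++ [true]

/-- Edge relation of the oriented path with direction pattern `ds`
(vertices are `0, 1, ..., ds.length`). -/
def pedge (ds : List Bool) (x y : ℕ) : Prop :=
  (y = x + 1 ∧ x < ds.length ∧ ds.getD x false = true) ∨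
  (x = y + 1 ∧ y < ds.length ∧ ds.getD y false = false)

/-- Number of edges of the connecting path `P_(a,r) = Q_{idxSet a r}`. -/
def plen {A : Type} [DecidableEq A] {k : ℕ} (a : A) (r : Fin k → A) : ℕ :=
  (qdirs (idxSet a r)).length

/-- Vertices of the digraph `D(A)` for the structure `(A; R)`. -/
inductive DVert {A : Type} [DecidableEq A] {k : ℕ} (R : Set (Fin k → A)) : Type where
  | base : A → DVert R
  | top : (r : Fin k → A) → r ∈ R → DVert R
  | inner : (a : A) → (r : Fin k → A) → r ∈ R → (j : ℕ) → 0 < j → j < plen a r → DVert R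

/-- `isAt v a r x` : vertex `v` of `D(A)` sits at position `x` of the connecting path
`P_(a,r)`. -/
def isAt {A : Type} [DecidableEq A] {k : ℕ} {R : Set (Fin k → A)} :
    DVert R → A → (Fin k → A) → ℕ → Prop
  | .base a', a, _, x => a' = a ∧ x = 0
  | .top r' _, a, r, x => r' = r ∧ x = plen a r
  | .inner a' r' _ j _ _, a, r, x => a' = a ∧ r' = r ∧ x = j

/-- The edge relation of the digraph `D(A)`. -/
def dedge {A : Type} [DecidableEq A] {k : ℕ} {R : Set (Fin k → A)}
    (u v : DVert R) : Prop :=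
  ∃ a r, r ∈ R ∧ ∃ x y, isAt u a r x ∧ isAt v a r y ∧
    pedge (qdirs (idxSet a r)) x y

/-- Height of position `x` along a path with direction pattern `ds`. -/
def phgt (ds : List Bool) (x : ℕ) : ℤ :=
  ((ds.take x).count true : ℤ) - ((ds.take x).count false : ℤ)

/-- The level function of the balanced digraph `D(A)`. -/
def lvlD {A : Type} [DecidableEq A] {k : ℕ} {R : Set (Fin k → A)} : DVert R → ℕ
  | .base _ => 0
  | .top _ _ => k + 2
  | .inner a r _ j _ _ => (phgt (qdirs (idxSet a r)) j).toNat

/-- `walkAlong ds u v` : one can walk in `D(A)` from `u` to `v` following the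
oriented path with direction pattern `ds` (i.e. there is a homomorphism of the path
into `D(A)` sending the initial vertex to `u` and the terminal vertex to `v`). -/
def walkAlong {A : Type} [DecidableEq A] {k : ℕ} {R : Set (Fin k → A)}
    (ds : List Bool) (u v : DVert R) : Prop :=
  ∃ φ : ℕ → DVert R, φ 0 = u ∧ φ ds.length = v ∧
    ∀ x < ds.length,
      (ds.getD x false = true → dedge (φ x) (φ (x + 1))) ∧
      (ds.getD x false = false → dedge (φ (x + 1)) (φ x))

/-!
`D(A)` is balanced: the level `lvlD` rises by one along every edge, and every `Q_I` has net
height `k + 2`, the height of `D(A)`. So a walk along `Q_I` runs from some `a ∈ A` to some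
`r ∈ R`, and its interior, at levels `1, …, k + 1`, never reaches a vertex shared by two
connecting paths; hence it stays inside `P_(a,r)`, and such walks are exactly the homomorphisms
`Q_I → P_(a,r)` fixing both ends. If `I ⊆ {i : a = rᵢ}` one exists blockwise, a zigzag of
`Q_I` folding onto a single edge of `P_(a,r)`. If `a ≠ rᵢ`, the single edge of `Q_{i}` at
level `i + 1` separates low from high heights, while `P_(a,r)` has a zigzag there, and no
height-preserving map sends the one into the other.
-/

section OrientedPath

variable {V W : Type*}

def IsPathHom (ds : List Bool) (E : V → V → Prop) (φ : ℕ → V) : Prop :=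
  ∀ x < ds.length,
    (ds.getD x false = true → E (φ x) (φ (x + 1))) ∧
    (ds.getD x false = false → E (φ (x + 1)) (φ x))

def ReachAlong (ds : List Bool) (E : V → V → Prop) (u v : V) : Prop :=
  ∃ φ : ℕ → V, φ 0 = u ∧ φ ds.length = v ∧ IsPathHom ds E φ

theorem phgt_zero (ds : List Bool) : phgt ds 0 = 0 := by simp [phgt]

theorem phgt_succ (ds : List Bool) {x : ℕ} (hx : x < ds.length) :
    phgt ds (x + 1) = phgt ds x + if ds.getD x false = true then 1 else -1 := by
  rw [phgt, phgt, List.take_add_one, List.getElem?_eq_getElem hx, List.getD_eq_getElem _ _ hx]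
  cases ds[x] <;> simp <;> ring

theorem phgt_append_of_le_length {xs : List Bool} (ys : List Bool) {x : ℕ}
    (hx : x ≤ xs.length) : phgt (xs ++ ys) x = phgt xs x := by
  rw [phgt, phgt, List.take_append_of_le_length hx]

theorem phgt_append_length_add (xs ys : List Bool) (n : ℕ) :
    phgt (xs ++ ys) (xs.length + n) = phgt xs xs.length + phgt ys n := by
  simp only [phgt, List.take_length_add_append, List.count_append, List.take_length]
  push_cast; ring

namespace IsPathHom

variable {ds : List Bool} {E : V → V → Prop} {φ : ℕ → V}

theorem adj (h : IsPathHom ds E φ) {x : ℕ} (hx : x < ds.length) :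
    E (φ x) (φ (x + 1)) ∨ E (φ (x + 1)) (φ x) := by
  cases hb : ds.getD x false
  · exact .inr ((h x hx).2 hb)
  · exact .inl ((h x hx).1 hb)

theorem map {E' : W → W → Prop} {g : V → W} (hg : ∀ u v, E u v → E' (g u) (g v))
    (h : IsPathHom ds E φ) : IsPathHom ds E' (g ∘ φ) :=
  fun x hx => ⟨fun hb => hg _ _ ((h x hx).1 hb), fun hb => hg _ _ ((h x hx).2 hb)⟩

theorem level_eq {f : V → ℤ} (hf : ∀ u v, E u v → f v = f u + 1) (h : IsPathHom ds E φ) :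
    ∀ x ≤ ds.length, f (φ x) = f (φ 0) + phgt ds x := by
  intro x hx
  induction x with
  | zero => simp [phgt_zero]
  | succ x ih =>
    rw [phgt_succ ds hx]
    cases hb : ds.getD x false
    · have := hf _ _ ((h x hx).2 hb)
      simp only [Bool.false_eq_true, if_false]
      linarith [ih (by omega)]
    · rw [hf _ _ ((h x hx).1 hb), ih (by omega), if_pos rfl, add_assoc]

theorem append {ds' : List Bool} {φ' : ℕ → V} (h : IsPathHom ds E φ)
    (h' : IsPathHom ds' E φ') (hj : φ ds.length = φ' 0) :
    IsPathHom (ds ++ ds') E (fun x => if x ≤ ds.length then φ x else φ' (x - ds.length)) := by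
  intro x hx
  rw [List.length_append] at hx
  rcases lt_or_ge x ds.length with hlt | hge
  · simpa only [List.getD_append _ _ _ _ hlt, if_pos hlt.le, if_pos (Nat.succ_le_of_lt hlt)]
      using h x hlt
  · obtain ⟨n, rfl⟩ := Nat.exists_eq_add_of_le hge
    have e : ∀ m,
        (if ds.length + m ≤ ds.length then φ (ds.length + m) else φ' m) = φ' m := by
      rintro (_ | m)
      · simp [hj]
      · simp
    simpa only [List.getD_append_right _ _ _ _ hge, Nat.add_sub_cancel_left, e,
      Nat.add_assoc] using h' n (by omega)

end IsPathHom

namespace ReachAlong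

variable {ds : List Bool} {E : V → V → Prop} {u v : V}

theorem map {E' : W → W → Prop} {g : V → W} (hg : ∀ u v, E u v → E' (g u) (g v))
    (h : ReachAlong ds E u v) : ReachAlong ds E' (g u) (g v) := by
  obtain ⟨φ, h0, h1, hφ⟩ := h
  exact ⟨g ∘ φ, by simp [h0], by simp [h1], hφ.map hg⟩

theorem append {ds' : List Bool} {w : V} (h : ReachAlong ds E u v) (h' : ReachAlong ds' E v w) :
    ReachAlong (ds ++ ds') E u w := by
  obtain ⟨φ, h0, h1, hφ⟩ := h
  obtain ⟨φ', h0', h1', hφ'⟩ := h'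
  refine ⟨_, ?_, ?_, hφ.append hφ' (h1.trans h0'.symm)⟩
  · simp [h0]
  · rcases eq_or_ne ds' [] with rfl | hne
    · simp [h1, ← h1', h0']
    · simp [hne, h1']

end ReachAlong

end OrientedPath

section PathEdges

variable {P : List Bool} {x y : ℕ}

theorem pedge.le_length (h : pedge P x y) : x ≤ P.length ∧ y ≤ P.length := by
  rcases h with ⟨_, _, _⟩ | ⟨_, _, _⟩ <;> omega

theorem pedge.adj (h : pedge P x y) : y = x + 1 ∨ x = y + 1 := by
  rcases h with ⟨_, _, _⟩ | ⟨_, _, _⟩ <;> omega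

theorem pedge.phgt_eq (h : pedge P x y) : phgt P y = phgt P x + 1 := by
  rcases h with ⟨rfl, hx, hb⟩ | ⟨rfl, hy, hb⟩
  · rw [phgt_succ P hx, hb, if_pos rfl]
  · rw [phgt_succ P hy, hb]; simp

theorem pedge.append_right (P' : List Bool) (h : pedge P x y) : pedge (P ++ P') x y := by
  rcases h with ⟨rfl, hx, hb⟩ | ⟨rfl, hy, hb⟩
  · exact .inl ⟨rfl, by rw [List.length_append]; omega, by rwa [List.getD_append _ _ _ _ hx]⟩
  · exact .inr ⟨rfl, by rw [List.length_append]; omega, by rwa [List.getD_append _ _ _ _ hy]⟩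

theorem pedge.append_left (P' : List Bool) (h : pedge P x y) :
    pedge (P' ++ P) (P'.length + x) (P'.length + y) := by
  rcases h with ⟨rfl, hx, hb⟩ | ⟨rfl, hy, hb⟩
  · refine .inl ⟨by omega, by rw [List.length_append]; omega, ?_⟩
    rwa [List.getD_append_right _ _ _ _ (by omega), Nat.add_sub_cancel_left]
  · refine .inr ⟨by omega, by rw [List.length_append]; omega, ?_⟩
    rwa [List.getD_append_right _ _ _ _ (by omega), Nat.add_sub_cancel_left]

theorem reachAlong_self (P : List Bool) : ReachAlong P (pedge P) 0 P.length :=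
  ⟨id, rfl, rfl, fun _ hx =>
    ⟨fun hb => .inl ⟨rfl, hx, hb⟩, fun hb => .inr ⟨rfl, hx, hb⟩⟩⟩

theorem reachAlong_zigzag_single : ReachAlong [true, false, true] (pedge [true]) 0 1 := by
  refine ⟨fun x => x % 2, rfl, rfl, fun x hx => ?_⟩
  have edge : pedge [true] 0 1 := .inl ⟨rfl, by simp, rfl⟩
  simp only [List.length_cons, List.length_nil] at hx
  interval_cases x <;> simpa using edge

theorem ReachAlong.append_pedge {Q Q' P' : List Bool} (h : ReachAlong Q (pedge P) 0 P.length)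
    (h' : ReachAlong Q' (pedge P') 0 P'.length) :
    ReachAlong (Q ++ Q') (pedge (P ++ P')) 0 (P ++ P').length := by
  have hl := h.map (g := id) fun _ _ e => e.append_right P'
  have hr := h'.map (g := (P.length + ·)) fun _ _ e => e.append_left P
  simp only [id, Nat.add_zero] at hl hr
  simpa using hl.append hr

theorem reachAlong_flatMap {α : Type*} {f g : α → List Bool} (L : List α)
    (h : ∀ l ∈ L, ReachAlong (f l) (pedge (g l)) 0 (g l).length) :
    ReachAlong (L.flatMap f) (pedge (L.flatMap g)) 0 (L.flatMap g).length := by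
  induction L with
  | nil => exact reachAlong_self []
  | cons l L ih =>
    simp only [List.flatMap_cons]
    exact (h l (by simp)).append_pedge (ih fun l' hl' => h l' (by simp [hl']))

end PathEdges

section Blocks

def IsUnitBlock (b : List Bool) : Prop :=
  phgt b b.length = 1 ∧ ∀ j, 0 ≤ phgt b j ∧ phgt b j ≤ 1

theorem isUnitBlock_single : IsUnitBlock [true] :=
  ⟨rfl, fun j => by rcases j with _ | j <;> simp [phgt]⟩

theorem isUnitBlock_zigzag : IsUnitBlock [true, false, true] :=
  ⟨rfl, fun j => by rcases j with _ | _ | _ | j <;> simp [phgt]⟩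

theorem IsUnitBlock.length_pos {b : List Bool} (hb : IsUnitBlock b) : 0 < b.length := by
  rcases b with _ | ⟨_, _⟩
  · simpa [phgt] using hb.1
  · simp

def blockStart (bl : List (List Bool)) (l : ℕ) : ℕ := (bl.take l).flatten.length

theorem blockStart_zero (bl : List (List Bool)) : blockStart bl 0 = 0 := by simp [blockStart]

theorem blockStart_cons_succ (b : List Bool) (bl : List (List Bool)) (l : ℕ) :
    blockStart (b :: bl) (l + 1) = b.length + blockStart bl l := by
  simp [blockStart]

theorem blockStart_succ (bl : List (List Bool)) (l : ℕ) :
    blockStart bl (l + 1) = blockStart bl l + (bl.getD l []).length := by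
  induction bl generalizing l with
  | nil => simp [blockStart]
  | cons b bl ih =>
    cases l with
    | zero => simp [blockStart]
    | succ l => rw [blockStart_cons_succ, blockStart_cons_succ, ih]; simp [Nat.add_assoc]

theorem blockStart_mono (bl : List (List Bool)) : Monotone (blockStart bl) :=
  monotone_nat_of_le_succ fun l => by rw [blockStart_succ]; omega

theorem blockStart_length (bl : List (List Bool)) :
    blockStart bl bl.length = bl.flatten.length := by
  simp [blockStart]

theorem phgt_flatten_blockStart_add (bl : List (List Bool)) {l m : ℕ} (hl : l < bl.length)
    (hm : m ≤ (bl.getD l []).length) :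
    phgt bl.flatten (blockStart bl l + m) =
      phgt bl.flatten (blockStart bl l) + phgt (bl.getD l []) m := by
  have hsplit :
      bl.flatten = (bl.take l).flatten ++ (bl.getD l [] ++ (bl.drop (l + 1)).flatten) := by
    rw [List.getD_eq_getElem _ _ hl, ← List.flatten_cons, ← List.drop_eq_getElem_cons,
      ← List.flatten_append, List.take_append_drop]
  set X := (bl.take l).flatten
  set Y := bl.getD l [] ++ (bl.drop (l + 1)).flatten
  have h0 : phgt (X ++ Y) X.length = phgt X X.length := by
    simpa [phgt_zero] using phgt_append_length_add X Y 0
  rw [hsplit, blockStart, phgt_append_length_add, h0, phgt_append_of_le_length _ hm]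

section UnitBlocks

variable {bl : List (List Bool)}

theorem le_blockStart (hbl : ∀ b ∈ bl, IsUnitBlock b) {l : ℕ} (hl : l ≤ bl.length) :
    l ≤ blockStart bl l := by
  induction bl generalizing l with
  | nil => simp_all
  | cons b bl ih =>
    rcases l with _ | l
    · simp
    · rw [blockStart_cons_succ]
      have := (hbl b (by simp)).length_pos
      have := ih (fun b' hb' => hbl b' (List.mem_cons_of_mem b hb')) (l := l) (by simpa using hl)
      omega

theorem phgt_flatten_le (hbl : ∀ b ∈ bl, IsUnitBlock b) {l j : ℕ}
    (hj : j ≤ blockStart bl l) :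
    phgt bl.flatten j ≤ l := by
  induction bl generalizing l j with
  | nil => simp [phgt]
  | cons b bl ih =>
    have hb := hbl b (by simp)
    rw [List.flatten_cons]
    rcases le_or_gt j b.length with hjb | hjb
    · rw [phgt_append_of_le_length _ hjb]
      rcases l with _ | l
      · simp_all [blockStart_zero, phgt_zero]
      · push_cast; linarith [(hb.2 j).2]
    · obtain ⟨n, rfl⟩ := Nat.exists_eq_add_of_le hjb.le
      rcases l with _ | l
      · rw [blockStart_zero] at hj; omega
      rw [blockStart_cons_succ] at hj
      rw [phgt_append_length_add, hb.1]
      have := ih (fun b' hb' => hbl b' (List.mem_cons_of_mem b hb')) (l := l) (j := n) (by omega)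
      push_cast; linarith

theorem le_phgt_flatten (hbl : ∀ b ∈ bl, IsUnitBlock b) {l j : ℕ} (hl : l ≤ bl.length)
    (hj : blockStart bl l ≤ j) :
    (l : ℤ) ≤ phgt bl.flatten j := by
  induction bl generalizing l j with
  | nil => simp_all [phgt]
  | cons b bl ih =>
    have hb := hbl b (by simp)
    have ih' := @ih (fun b' hb' => hbl b' (List.mem_cons_of_mem b hb'))
    rw [List.flatten_cons]
    rcases le_or_gt j b.length with hjb | hjb
    · rw [phgt_append_of_le_length _ hjb]
      rcases l with _ | l
      · simpa using (hb.2 j).1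
      · rw [blockStart_cons_succ] at hj
        have := le_blockStart (fun b' hb' => hbl b' (List.mem_cons_of_mem b hb')) (l := l)
          (by simpa using hl)
        obtain rfl : j = b.length := by omega
        obtain rfl : l = 0 := by omega
        simp [hb.1]
    · obtain ⟨n, rfl⟩ := Nat.exists_eq_add_of_le hjb.le
      rw [phgt_append_length_add, hb.1]
      rcases l with _ | l
      · linarith [ih' (l := 0) (j := n) (Nat.zero_le _) (by simp [blockStart_zero])]
      · rw [blockStart_cons_succ] at hj
        have := ih' (l := l) (j := n) (by simpa using hl) (by omega)
        push_cast; linarith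

theorem phgt_flatten_blockStart (hbl : ∀ b ∈ bl, IsUnitBlock b) {l : ℕ}
    (hl : l ≤ bl.length) :
    phgt bl.flatten (blockStart bl l) = l :=
  le_antisymm (phgt_flatten_le hbl le_rfl) (le_phgt_flatten hbl hl le_rfl)

end UnitBlocks

end Blocks

section QPaths

variable {k : ℕ} (I : Finset (Fin k))

def qbl : List (List Bool) :=
  [true] :: ((List.finRange k).map (fun l => if l ∈ I then [true] else [true, false, true]) ++
    [[true]])

theorem qdirs_eq_flatten : qdirs I = (qbl I).flatten := by
  simp [qdirs, qbl, List.flatMap]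

theorem length_qbl : (qbl I).length = k + 2 := by simp [qbl]

theorem isUnitBlock_of_mem_qbl : ∀ b ∈ qbl I, IsUnitBlock b := by
  simp only [qbl, List.mem_cons, List.mem_append, List.mem_map, List.not_mem_nil, or_false]
  rintro b (rfl | ⟨l, -, rfl⟩ | rfl)
  · exact isUnitBlock_single
  · split
    · exact isUnitBlock_single
    · exact isUnitBlock_zigzag
  · exact isUnitBlock_single

theorem qbl_getD_succ (i : Fin k) :
    (qbl I).getD (i + 1) [] = if i ∈ I then [true] else [true, false, true] := by
  simp [qbl, List.getD_eq_getElem?_getD]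

theorem qbl_getD_last : (qbl I).getD (k + 1) [] = [true] := by
  simp [qbl, List.getD_eq_getElem?_getD]

theorem blockStart_qbl_succ_succ (i : Fin k) :
    blockStart (qbl I) (i + 2) = blockStart (qbl I) (i + 1) + if i ∈ I then 1 else 3 := by
  rw [blockStart_succ, qbl_getD_succ]
  split <;> rfl

theorem length_qdirs : (qdirs I).length = blockStart (qbl I) (k + 1) + 1 := by
  rw [qdirs_eq_flatten, ← blockStart_length, length_qbl, blockStart_succ, qbl_getD_last]
  rfl

theorem phgt_qdirs_le {l j : ℕ} (hj : j ≤ blockStart (qbl I) l) : phgt (qdirs I) j ≤ l := by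
  rw [qdirs_eq_flatten]
  exact phgt_flatten_le (isUnitBlock_of_mem_qbl I) hj

theorem le_phgt_qdirs {l j : ℕ} (hl : l ≤ k + 2) (hj : blockStart (qbl I) l ≤ j) :
    (l : ℤ) ≤ phgt (qdirs I) j := by
  rw [qdirs_eq_flatten]
  exact le_phgt_flatten (isUnitBlock_of_mem_qbl I) (by rwa [length_qbl]) hj

theorem le_blockStart_qbl {l : ℕ} (hl : l ≤ k + 2) : l ≤ blockStart (qbl I) l :=
  le_blockStart (isUnitBlock_of_mem_qbl I) (by rwa [length_qbl])

theorem phgt_qdirs_length : phgt (qdirs I) (qdirs I).length = k + 2 := by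
  have h := phgt_flatten_blockStart (isUnitBlock_of_mem_qbl I) le_rfl
  rw [blockStart_length, ← qdirs_eq_flatten, length_qbl] at h
  exact_mod_cast h

theorem phgt_qdirs_nonneg (j : ℕ) : 0 ≤ phgt (qdirs I) j := by
  simpa using le_phgt_qdirs I (l := 0) (by omega) (by simp [blockStart_zero])

theorem one_le_phgt_qdirs {j : ℕ} (hj : 0 < j) : 1 ≤ phgt (qdirs I) j := by
  have h1 : blockStart (qbl I) 1 = 1 := rfl
  simpa using le_phgt_qdirs I (l := 1) (by omega) (by omega)

theorem phgt_qdirs_le_succ {j : ℕ} (hj : j < (qdirs I).length) :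
    phgt (qdirs I) j ≤ k + 1 := by
  rw [length_qdirs] at hj
  exact_mod_cast phgt_qdirs_le I (l := k + 1) (by omega)

theorem two_le_length_qdirs : 2 ≤ (qdirs I).length := by
  have := le_blockStart_qbl I (l := k + 1) (by omega)
  rw [length_qdirs]; omega

theorem phgt_qdirs_zigzag {i : Fin k} (hi : i ∉ I) {m : ℕ} (hm : m ≤ 3) :
    phgt (qdirs I) (blockStart (qbl I) (i + 1) + m) = i + 1 + phgt [true, false, true] m := by
  have hbl := isUnitBlock_of_mem_qbl I
  have hl : (i : ℕ) + 1 < (qbl I).length := by rw [length_qbl]; omega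
  have hblock := qbl_getD_succ I i
  rw [if_neg hi] at hblock
  rw [qdirs_eq_flatten, phgt_flatten_blockStart_add _ hl (by rw [hblock]; exact hm),
    phgt_flatten_blockStart hbl hl.le, hblock]
  push_cast; rfl

end QPaths

theorem reachAlong_qdirs_of_subset {k : ℕ} {I J : Finset (Fin k)} (h : I ⊆ J) :
    ReachAlong (qdirs I) (pedge (qdirs J)) 0 (qdirs J).length := by
  refine ((reachAlong_self [true]).append_pedge
    (reachAlong_flatMap _ fun l _ => ?_)).append_pedge (reachAlong_self [true])
  by_cases hJ : l ∈ J
  · by_cases hI : l ∈ I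
    · simpa [hI, hJ] using reachAlong_self [true]
    · simpa [hI, hJ] using reachAlong_zigzag_single
  · have hI : l ∉ I := fun hI => hJ (h hI)
    simpa [hI, hJ] using reachAlong_self [true, false, true]

/-- `σ p` has height `≤ h` and `σ (p + 1)` height `> h`, so `σ (p + 1) = q + 1` or
`σ p = q + 2`. But `q + 1` has no neighbour of height `> h` to receive `p + 2`, and `q + 2` none
of height `≤ h` to receive `p - 1`. -/
theorem false_of_bridge_to_zigzag {Q P : List Bool} {σ : ℕ → ℕ} {h : ℤ} {p q : ℕ}
    (hadj : ∀ x < Q.length, σ (x + 1) = σ x + 1 ∨ σ x = σ (x + 1) + 1)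
    (hσ : ∀ x ≤ Q.length, phgt P (σ x) = phgt Q x)
    (hp : 0 < p) (hpQ : p + 2 ≤ Q.length)
    (hQlow : ∀ x ≤ p, phgt Q x ≤ h) (hQhigh : ∀ x, p + 1 ≤ x → h + 1 ≤ phgt Q x)
    (hPlow : ∀ j ≤ q, phgt P j ≤ h) (hPq1 : phgt P (q + 1) = h + 1)
    (hPq2 : phgt P (q + 2) = h) (hPhigh : ∀ j, q + 3 ≤ j → h + 1 ≤ phgt P j) : False := by
  have low : ∀ x ≤ p, σ x ≤ q ∨ σ x = q + 2 := by
    intro x hx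
    have hx' := (hσ x (by omega)).trans_le (hQlow x hx)
    by_contra! hc
    rcases (show σ x = q + 1 ∨ q + 3 ≤ σ x by omega) with e | e
    · rw [e, hPq1] at hx'; omega
    · linarith [hPhigh _ e]
  have high : ∀ x, p + 1 ≤ x → x ≤ Q.length → σ x = q + 1 ∨ q + 3 ≤ σ x := by
    intro x hx hxQ
    have hx' := (hQhigh x hx).trans_eq (hσ x hxQ).symm
    by_contra! hc
    rcases (show σ x ≤ q ∨ σ x = q + 2 by omega) with e | e
    · linarith [hPlow _ e]
    · rw [e, hPq2] at hx'; omega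
  obtain ⟨p, rfl⟩ := Nat.exists_eq_add_of_le' hp
  have h0 : σ (p + 1) = σ p + 1 ∨ σ p = σ (p + 1) + 1 := hadj p (by omega)
  have h1 : σ (p + 2) = σ (p + 1) + 1 ∨ σ (p + 1) = σ (p + 2) + 1 := hadj (p + 1) (by omega)
  have h2 : σ (p + 3) = σ (p + 2) + 1 ∨ σ (p + 2) = σ (p + 3) + 1 := hadj (p + 2) (by omega)
  rcases low p (by omega) with _ | _ <;> rcases low (p + 1) le_rfl with _ | _ <;>
    rcases high (p + 2) le_rfl (by omega) with _ | _ <;>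
    rcases high (p + 3) (by omega) hpQ with _ | _ <;> omega

theorem not_reachAlong_qdirs_singleton {k : ℕ} {J : Finset (Fin k)} {i : Fin k} (hi : i ∉ J)
    (j : ℕ) : ¬ ReachAlong (qdirs {i}) (pedge (qdirs J)) 0 j := by
  rintro ⟨σ, hσ0, -, hσ⟩
  have hpQ := blockStart_qbl_succ_succ {i} i
  have hqP := blockStart_qbl_succ_succ J i
  rw [if_pos (Finset.mem_singleton_self i)] at hpQ
  rw [if_neg hi] at hqP
  refine false_of_bridge_to_zigzag (Q := qdirs {i}) (P := qdirs J) (σ := σ) (h := i + 1)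
    (p := blockStart (qbl {i}) (i + 1)) (q := blockStart (qbl J) (i + 1))
    (fun x hx => ?_) (fun x hx => ?_) ?_ ?_
    (fun x hx => ?_) (fun x hx => ?_) (fun x hx => ?_) ?_ ?_ (fun x hx => ?_)
  · rcases hσ.adj hx with e | e <;> have := e.adj <;> omega
  · simpa [hσ0, phgt_zero] using hσ.level_eq (fun _ _ e => pedge.phgt_eq e) x hx
  · have := le_blockStart_qbl {i} (l := i + 1) (by omega)
    omega
  · rw [length_qdirs]
    have := blockStart_mono (qbl {i}) (show (i : ℕ) + 2 ≤ k + 1 by omega)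
    omega
  · exact_mod_cast phgt_qdirs_le {i} hx
  · exact_mod_cast le_phgt_qdirs {i} (l := i + 2) (by omega) (by omega)
  · exact_mod_cast phgt_qdirs_le J hx
  · rw [phgt_qdirs_zigzag J hi (by norm_num)]; rfl
  · rw [phgt_qdirs_zigzag J hi (by norm_num)]; rfl
  · exact_mod_cast le_phgt_qdirs J (l := i + 2) (by omega) (by omega)

section DigraphD

variable {A : Type} [DecidableEq A] {k : ℕ} {R : Set (Fin k → A)}

theorem isAt.le_plen {v : DVert R} {a : A} {r : Fin k → A} {x : ℕ} (h : isAt v a r x) :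
    x ≤ plen a r := by
  cases v with
  | base => exact h.2 ▸ Nat.zero_le _
  | top => exact h.2.le
  | inner a' r' _ j _ hj => obtain ⟨rfl, rfl, rfl⟩ := h; exact hj.le

theorem isAt_unique {v : DVert R} {a : A} {r : Fin k → A} {x y : ℕ} (hx : isAt v a r x)
    (hy : isAt v a r y) : x = y := by
  cases v with
  | base => exact hx.2.trans hy.2.symm
  | top => exact hx.2.trans hy.2.symm
  | inner => exact hx.2.2.trans hy.2.2.symm

theorem lvlD_eq_phgt {v : DVert R} {a : A} {r : Fin k → A} {x : ℕ} (h : isAt v a r x) :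
    (lvlD v : ℤ) = phgt (qdirs (idxSet a r)) x := by
  cases v with
  | base => obtain ⟨-, rfl⟩ := h; simp [lvlD, phgt_zero]
  | top => obtain ⟨rfl, rfl⟩ := h; rw [plen, phgt_qdirs_length]; simp [lvlD]
  | inner =>
    obtain ⟨rfl, rfl, rfl⟩ := h
    exact Int.toNat_of_nonneg (phgt_qdirs_nonneg _ _)

theorem dedge.lvlD_eq {u v : DVert R} (h : dedge u v) : (lvlD v : ℤ) = lvlD u + 1 := by
  obtain ⟨a, r, -, x, y, hu, hv, hp⟩ := h
  rw [lvlD_eq_phgt hu, lvlD_eq_phgt hv, hp.phgt_eq]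

theorem lvlD_le (v : DVert R) : lvlD v ≤ k + 2 := by
  cases v with
  | base => simp [lvlD]
  | top => simp [lvlD]
  | inner a r _ j _ hj =>
    have := phgt_qdirs_le_succ (idxSet a r) hj
    simp only [lvlD]; omega

theorem exists_eq_base_of_lvlD_eq_zero {v : DVert R} (h : lvlD v = 0) : ∃ a, v = .base a := by
  cases v with
  | base a => exact ⟨a, rfl⟩
  | top => simp [lvlD] at h
  | inner a r _ j hj _ =>
    have := one_le_phgt_qdirs (idxSet a r) hj
    simp only [lvlD] at h; omega

theorem exists_eq_top_of_lvlD_eq {v : DVert R} (h : lvlD v = k + 2) :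
    ∃ r hr, v = .top r hr := by
  cases v with
  | base => simp [lvlD] at h
  | top r hr => exact ⟨r, hr, rfl⟩
  | inner a r _ j _ hj =>
    have := phgt_qdirs_le_succ (idxSet a r) hj
    simp only [lvlD] at h; omega

theorem exists_isAt_of_lvlD {v : DVert R} (h1 : 1 ≤ lvlD v) (h2 : lvlD v ≤ k + 1) :
    ∃ a r x, isAt v a r x := by
  cases v with
  | base => simp [lvlD] at h1
  | top => simp [lvlD] at h2
  | inner a r _ j _ _ => exact ⟨a, r, j, rfl, rfl, rfl⟩

theorem isAt.interior_of_lvlD {v : DVert R} {a : A} {r : Fin k → A} {x : ℕ}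
    (h : isAt v a r x) (h1 : 1 ≤ lvlD v) (h2 : lvlD v ≤ k + 1) : 0 < x ∧ x < plen a r := by
  have hlvl := lvlD_eq_phgt h
  refine ⟨Nat.pos_of_ne_zero ?_, lt_of_le_of_ne h.le_plen ?_⟩ <;> rintro rfl
  · rw [phgt_zero] at hlvl; omega
  · rw [plen, phgt_qdirs_length] at hlvl; omega

theorem isAt.eq_of_interior {v : DVert R} {a a' : A} {r r' : Fin k → A} {x y : ℕ}
    (h : isAt v a r x) (hx : 0 < x) (hx' : x < plen a r) (h' : isAt v a' r' y) :
    a' = a ∧ r' = r := by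
  cases v with
  | base => exact absurd h.2 hx.ne'
  | top => exact absurd h.2 hx'.ne
  | inner => exact ⟨h'.1.symm.trans h.1, h'.2.1.symm.trans h.2.1⟩

theorem dedge.exists_pedge {u v : DVert R} {a : A} {r : Fin k → A} {x : ℕ} (hd : dedge u v)
    (h : isAt u a r x ∨ isAt v a r x) (hx : 0 < x) (hx' : x < plen a r) :
    ∃ x' y', isAt u a r x' ∧ isAt v a r y' ∧ pedge (qdirs (idxSet a r)) x' y' := by
  obtain ⟨a'', r'', -, x'', y'', hu, hv, hp⟩ := hd
  obtain ⟨rfl, rfl⟩ : a'' = a ∧ r'' = r := by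
    rcases h with h | h
    · exact h.eq_of_interior hx hx' hu
    · exact h.eq_of_interior hx hx' hv
  exact ⟨x'', y'', hu, hv, hp⟩

/-- Every edge of `D(A)` has an endpoint of level strictly between `0` and `k + 2`, that is, an
interior vertex of a connecting path, which pins the edge to that path. -/
theorem dedge.pedge_of_isAt {u v : DVert R} {a : A} {r : Fin k → A} {x y : ℕ} (hd : dedge u v)
    (hu : isAt u a r x) (hv : isAt v a r y) : pedge (qdirs (idxSet a r)) x y := by
  have hlvl := hd.lvlD_eq
  have := lvlD_le u
  have := lvlD_le v
  obtain ⟨x', y', hu', hv', hp⟩ : ∃ x' y', isAt u a r x' ∧ isAt v a r y' ∧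
      pedge (qdirs (idxSet a r)) x' y' := by
    rcases Nat.eq_zero_or_pos (lvlD u) with h0 | h0
    · have hint := hv.interior_of_lvlD (by omega) (by omega)
      exact hd.exists_pedge (.inr hv) hint.1 hint.2
    · have hint := hu.interior_of_lvlD h0 (by omega)
      exact hd.exists_pedge (.inl hu) hint.1 hint.2
  rwa [isAt_unique hu hu', isAt_unique hv hv']

theorem walkAlong_iff_reachAlong {ds : List Bool} {u v : DVert R} :
    walkAlong ds u v ↔ ReachAlong ds dedge u v := Iff.rfl

theorem walkAlong.lvlD_eq {ds : List Bool} {u v : DVert R} (h : walkAlong ds u v) :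
    (lvlD v : ℤ) = lvlD u + phgt ds ds.length := by
  obtain ⟨φ, rfl, rfl, hφ⟩ := walkAlong_iff_reachAlong.1 h
  exact hφ.level_eq (fun _ _ e => e.lvlD_eq) _ le_rfl

theorem walkAlong_qdirs_endpoints {I : Finset (Fin k)} {u v : DVert R}
    (h : walkAlong (qdirs I) u v) : (∃ a, u = .base a) ∧ ∃ r hr, v = .top r hr := by
  have hlvl := h.lvlD_eq
  rw [phgt_qdirs_length] at hlvl
  have := lvlD_le v
  exact ⟨exists_eq_base_of_lvlD_eq_zero (by omega), exists_eq_top_of_lvlD_eq (by omega)⟩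

def pathVert (a : A) (r : Fin k → A) (hr : r ∈ R) (j : ℕ) : DVert R :=
  if h0 : j = 0 then .base a
  else if h : j < plen a r then .inner a r hr j (Nat.pos_of_ne_zero h0) h
  else .top r hr

theorem isAt_pathVert (a : A) (r : Fin k → A) (hr : r ∈ R) {j : ℕ} (hj : j ≤ plen a r) :
    isAt (pathVert a r hr j) a r j := by
  unfold pathVert
  split_ifs with h0 h
  · exact ⟨rfl, h0⟩
  · exact ⟨rfl, rfl, rfl⟩
  · exact ⟨rfl, by omega⟩

theorem pathVert_zero (a : A) (r : Fin k → A) (hr : r ∈ R) :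
    pathVert a r hr 0 = .base a := rfl

theorem pathVert_plen (a : A) (r : Fin k → A) (hr : r ∈ R) :
    pathVert a r hr (plen a r) = .top r hr := by
  have : plen a r ≠ 0 := by have := two_le_length_qdirs (idxSet a r); rw [plen]; omega
  rw [pathVert, dif_neg this, dif_neg (lt_irrefl _)]

theorem walkAlong_qdirs_of_subset {I : Finset (Fin k)} {a : A} {r : Fin k → A} (hr : r ∈ R)
    (h : I ⊆ idxSet a r) : walkAlong (qdirs I) (.base a : DVert R) (.top r hr) := by
  rw [← pathVert_zero a r hr, ← pathVert_plen a r hr]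
  refine (reachAlong_qdirs_of_subset h).map fun x y hp => ?_
  have hle := hp.le_length
  exact ⟨a, r, hr, x, y, isAt_pathVert a r hr hle.1, isAt_pathVert a r hr hle.2, hp⟩

theorem exists_isAt_of_adj {u v : DVert R} {a : A} {r : Fin k → A} {x : ℕ}
    (hd : dedge u v ∨ dedge v u) (hu : isAt u a r x) (hx : 0 < x) (hx' : x < plen a r) :
    ∃ y, isAt v a r y := by
  rcases hd with hd | hd
  · obtain ⟨-, y, -, hv, -⟩ := hd.exists_pedge (.inl hu) hx hx'
    exact ⟨y, hv⟩
  · obtain ⟨y, -, hv, -, -⟩ := hd.exists_pedge (.inr hu) hx hx'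
    exact ⟨y, hv⟩

theorem IsPathHom.exists_isAt {I : Finset (Fin k)} {φ : ℕ → DVert R} {a : A} {r : Fin k → A}
    {hr : r ∈ R} (hφ : IsPathHom (qdirs I) dedge φ) (h0 : φ 0 = .base a)
    (hn : φ (qdirs I).length = .top r hr) :
    ∀ x ≤ (qdirs I).length, ∃ y, isAt (φ x) a r y := by
  set n := (qdirs I).length
  have hn2 : 2 ≤ n := two_le_length_qdirs I
  have hint : ∀ x, 0 < x → x < n → 1 ≤ lvlD (φ x) ∧ lvlD (φ x) ≤ k + 1 := by
    intro x hx hxn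
    have hlvl := hφ.level_eq (fun _ _ e => e.lvlD_eq) x hxn.le
    rw [h0, show lvlD (DVert.base a : DVert R) = 0 from rfl, Nat.cast_zero, zero_add] at hlvl
    have := one_le_phgt_qdirs I hx
    have := phgt_qdirs_le_succ I hxn
    omega
  have interior : ∀ {a' r' x y}, 0 < x → x < n → isAt (φ x) a' r' y →
      0 < y ∧ y < plen a' r' := fun hx hxn hy =>
    hy.interior_of_lvlD (hint _ hx hxn).1 (hint _ hx hxn).2
  obtain ⟨a₁, r₁, y₁, h₁⟩ :=
    exists_isAt_of_lvlD (hint 1 one_pos hn2).1 (hint 1 one_pos hn2).2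
  have hon : ∀ x, 0 < x → x < n → ∃ y, isAt (φ x) a₁ r₁ y := by
    intro x hx hxn
    induction x with
    | zero => omega
    | succ x ih =>
      rcases Nat.eq_zero_or_pos x with rfl | hx0
      · exact ⟨y₁, h₁⟩
      obtain ⟨y, hy⟩ := ih hx0 (by omega)
      have hy' := interior hx0 (by omega) hy
      exact exists_isAt_of_adj (hφ.adj (by omega)) hy hy'.1 hy'.2
  obtain rfl : a₁ = a := by
    have hy₁ := interior one_pos hn2 h₁
    obtain ⟨z, hz⟩ := exists_isAt_of_adj (hφ.adj (x := 0) (by omega)).symm h₁ hy₁.1 hy₁.2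
    rw [h0] at hz
    exact hz.1.symm
  obtain rfl : r₁ = r := by
    obtain ⟨y, hy⟩ := hon (n - 1) (by omega) (by omega)
    have hy' := interior (by omega) (by omega) hy
    obtain ⟨z, hz⟩ := exists_isAt_of_adj (hφ.adj (x := n - 1) (by omega)) hy hy'.1 hy'.2
    rw [Nat.sub_add_cancel (by omega), hn] at hz
    exact hz.1.symm
  intro x hx
  rcases Nat.eq_zero_or_pos x with rfl | hx0
  · exact ⟨0, by rw [h0]; exact ⟨rfl, rfl⟩⟩
  rcases hx.lt_or_eq with hxn | rfl
  · exact hon x hx0 hxn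
  · exact ⟨plen a₁ r₁, by rw [hn]; exact ⟨rfl, rfl⟩⟩

theorem reachAlong_of_walkAlong_qdirs {I : Finset (Fin k)} {a : A} {r : Fin k → A}
    {hr : r ∈ R} (h : walkAlong (qdirs I) (.base a : DVert R) (.top r hr)) :
    ReachAlong (qdirs I) (pedge (qdirs (idxSet a r))) 0 (plen a r) := by
  obtain ⟨φ, h0, hn, hφ⟩ := walkAlong_iff_reachAlong.1 h
  have hon := hφ.exists_isAt h0 hn
  have : ∀ x, ∃ y, x ≤ (qdirs I).length → isAt (φ x) a r y := fun x =>
    if hx : x ≤ (qdirs I).length then (hon x hx).imp fun _ hy _ => hy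
    else ⟨0, fun h => absurd h hx⟩
  choose ψ hψ using this
  refine ⟨ψ, ?_, ?_, fun x hx => ⟨fun hb => ?_, fun hb => ?_⟩⟩
  · exact isAt_unique (hψ 0 (Nat.zero_le _)) (by rw [h0]; exact ⟨rfl, rfl⟩)
  · exact isAt_unique (hψ _ le_rfl) (by rw [hn]; exact ⟨rfl, rfl⟩)
  · exact ((hφ x hx).1 hb).pedge_of_isAt (hψ x hx.le) (hψ (x + 1) hx)
  · exact ((hφ x hx).2 hb).pedge_of_isAt (hψ (x + 1) hx) (hψ x hx.le)

theorem walkAlong_qdirs_singleton_iff {a : A} {r : Fin k → A} (hr : r ∈ R) (i : Fin k) :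
    walkAlong (qdirs {i}) (.base a : DVert R) (.top r hr) ↔ a = r i := by
  refine ⟨fun h => ?_, fun h => walkAlong_qdirs_of_subset hr (by simpa [idxSet] using h)⟩
  by_contra hne
  exact not_reachAlong_qdirs_singleton (by simpa [idxSet] using hne) _
    (reachAlong_of_walkAlong_qdirs h)

end DigraphD

/-- In `D(A)`: there is a homomorphism from `Q = Q_∅` into the connecting path
`P_(a,r)` (from `a` to `r`); there is one from `Q_{i}` iff `a = rᵢ`; consequently
`A` is pp-defined by `{x : ∃ y, x →^Q y}` and `R` by
`{(x₁,...,x_k) : ∃ y, ∀ i, xᵢ →^{Q_{i}} y}`. -/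
theorem D_pp_defines_A_and_R {A : Type} [DecidableEq A] {k : ℕ}
    (R : Set (Fin k → A)) (hR : R.Nonempty) :
    (∀ (a : A) (r : Fin k → A) (hr : r ∈ R),
      walkAlong (qdirs (∅ : Finset (Fin k)))
        (DVert.base a : DVert R) (DVert.top r hr)) ∧
    (∀ (a : A) (r : Fin k → A) (hr : r ∈ R) (i : Fin k),
      walkAlong (qdirs ({i} : Finset (Fin k)))
        (DVert.base a : DVert R) (DVert.top r hr) ↔ a = r i) ∧
    (∀ v : DVert R,
      (∃ w, walkAlong (qdirs (∅ : Finset (Fin k))) v w) ↔ ∃ a, v = DVert.base a) ∧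
    (∀ t : Fin k → DVert R,
      (∃ w, ∀ i, walkAlong (qdirs ({i} : Finset (Fin k))) (t i) w) ↔
      ∃ r, ∃ _ : r ∈ R, ∀ i, t i = DVert.base (r i)) := by
  refine ⟨fun a r hr => walkAlong_qdirs_of_subset hr (Finset.empty_subset _),
    fun a r hr i => walkAlong_qdirs_singleton_iff hr i,
    fun v => ⟨fun ⟨_, hw⟩ => (walkAlong_qdirs_endpoints hw).1, ?_⟩, fun t => ⟨?_, ?_⟩⟩
  · rintro ⟨a, rfl⟩
    obtain ⟨r, hr⟩ := hR
    exact ⟨_, walkAlong_qdirs_of_subset hr (Finset.empty_subset _)⟩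
  · rintro ⟨w, hw⟩
    rcases isEmpty_or_nonempty (Fin k) with _ | ⟨⟨i₀⟩⟩
    · obtain ⟨r, hr⟩ := hR
      exact ⟨r, hr, isEmptyElim⟩
    obtain ⟨r, hr, rfl⟩ := (walkAlong_qdirs_endpoints (hw i₀)).2
    refine ⟨r, hr, fun i => ?_⟩
    obtain ⟨a, ha⟩ := (walkAlong_qdirs_endpoints (hw i)).1
    have hwi := hw i
    rw [ha] at hwi
    rw [ha, (walkAlong_qdirs_singleton_iff hr i).1 hwi]
  · rintro ⟨r, hr, ht⟩
    exact ⟨.top r hr, fun i => ht i ▸ (walkAlong_qdirs_singleton_iff hr i).2 rfl⟩
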